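/- arXiv:2510.21573 — 2 statements merged into one kernel-verified Lean document; each statement's English description precedes it below -/
import Mathlib

section
/- Fix integers n ≥ 1, 1 ≤ k ≤ n, and a strictly increasing k-tuple I = (i_1 < … < i_k) in {1,…,n}. Then in ℚ(a_1,…,a_n,ħ): S_I = Σ_{J} [ ∏_{r=1}^{k} ( ∏_{α=1}^{i_r−1} (a_α − a_{j_r}) · ∏_{β=i_r+1}^{n} (a_{j_r} − a_β + ħ) ) ] / [ ∏_{1≤ℓ<m≤k} (a_{j_ℓ} − a_{j_m})(a_{j_ℓ} − a_{j_m} + ħ) · ∏_{p=1}^{k} ∏_{v ∈ {1,…,n}∖{j_1,…,j_k}} (a_v − a_{j_p})(a_{j_p} − a_v + ħ) ], where the sum on the right runs over all k-tuples J = (j_1,…,j_k) of pairwise distinct elements of {1,…,n} satisfying j_r ≥ i_r for every 1 ≤ r ≤ k (not necessarily increasing). That is, the localization sum over increasing tuples and permutations reduces to a single sum over entrywise dominant tuples. -/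
open Finset MvPolynomial

/-- The polynomial ring `ℚ[a_1,…,a_n,ħ]`. -/
abbrev APoly (n : ℕ) := MvPolynomial (Fin n ⊕ Unit) ℚ

/-- The variable `a_v` (0-based index `v`). -/
noncomputable def av {n : ℕ} (v : Fin n) : APoly n := X (Sum.inl v)

/-- The variable `ħ`. -/
noncomputable def hbar {n : ℕ} : APoly n := X (Sum.inr ())

/-- The field `ℚ(a_1,…,a_n,ħ)`. -/
abbrev AField (n : ℕ) := FractionRing (APoly n)

/-- Numerator of the `σ`-summand of the weight function `W(p_I)` after the substitution
`t_s := a_{j_s}`. -/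
noncomputable def wNum {n k : ℕ} (I J : Fin k → Fin n) (σ : Equiv.Perm (Fin k)) : APoly n :=
  ∏ r : Fin k,
    ((∏ α ∈ Finset.Iio (I r), (av α - av (J (σ r)))) *
      (∏ β ∈ Finset.Ioi (I r), (av (J (σ r)) - av β + hbar)))

/-- Denominator of the `σ`-summand of the weight function `W(p_I)` after the substitution
`t_s := a_{j_s}`. -/
noncomputable def wDen {n k : ℕ} (J : Fin k → Fin n) (σ : Equiv.Perm (Fin k)) : APoly n :=
  ∏ m : Fin k, ∏ l ∈ Finset.Iio m,
    (av (J (σ l)) - av (J (σ m))) * (av (J (σ l)) - av (J (σ m)) + hbar)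

/-- The restricted weight function `W(p_I)|_{p_J}`, obtained by substituting `t_s := a_{j_s}`
in the defining formula of `W(p_I)`. -/
noncomputable def Wres {n k : ℕ} (I J : Fin k → Fin n) : AField n :=
  ∑ σ : Equiv.Perm (Fin k),
    algebraMap (APoly n) (AField n) (wNum I J σ) / algebraMap (APoly n) (AField n) (wDen J σ)

/-- The Euler class `e(T_{p_J}X)`. -/
noncomputable def euler {n k : ℕ} (J : Fin k → Fin n) : APoly n :=
  ∏ v ∈ Finset.univ.filter (fun v : Fin n => ∀ p, J p ≠ v), ∏ p : Fin k,
    (av v - av (J p)) * (av (J p) - av v + hbar)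

/-- The localization sum `S_I`, over all strictly increasing `k`-tuples `J` in `{1,…,n}`. -/
noncomputable def Sloc (n k : ℕ) (I : Fin k → Fin n) : AField n :=
  ∑ J ∈ Finset.univ.filter (fun J : Fin k → Fin n => ∀ i j : Fin k, i < j → J i < J j),
    Wres I J / algebraMap (APoly n) (AField n) (euler J)
lemma wNum_comp {n k : ℕ} (I J : Fin k → Fin n) (σ : Equiv.Perm (Fin k)) :
    wNum I J σ = wNum I (J ∘ σ) 1 := by
  simp [wNum, Function.comp]

lemma wDen_comp {n k : ℕ} (J : Fin k → Fin n) (σ : Equiv.Perm (Fin k)) :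
    wDen J σ = wDen (J ∘ σ) 1 := by
  simp [wDen, Function.comp]

lemma euler_comp {n k : ℕ} (J : Fin k → Fin n) (σ : Equiv.Perm (Fin k)) :
    euler (J ∘ σ) = euler J := by
  unfold euler
  have hf : (Finset.univ.filter (fun v : Fin n => ∀ p, (J ∘ σ) p ≠ v)) =
      Finset.univ.filter (fun v : Fin n => ∀ p, J p ≠ v) := by
    apply Finset.filter_congr
    intro v _
    constructor
    · intro h p
      simpa using h (σ.symm p)
    · intro h p
      exact h (σ p)
  rw [hf]
  refine Finset.prod_congr rfl fun v _ => ?_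
  exact Equiv.prod_comp σ (fun p => (av v - av (J p)) * (av (J p) - av v + hbar))

lemma sort_comp_eq_inv {n k : ℕ} (J : Fin k → Fin n) (hJ : StrictMono J)
    (σ : Equiv.Perm (Fin k)) : Tuple.sort (J ∘ σ) = σ⁻¹ := by
  have hinj : Function.Injective (J ∘ σ) := hJ.injective.comp σ.injective
  have h1 : StrictMono ((J ∘ σ) ∘ Tuple.sort (J ∘ σ)) :=
    (Tuple.monotone_sort (J ∘ σ)).strictMono_of_injective
      (hinj.comp (Tuple.sort (J ∘ σ)).injective)
  have h2 : (J ∘ σ) ∘ Tuple.sort (J ∘ σ) = J := by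
    apply (h1.range_inj hJ).mp
    rw [(Tuple.sort (J ∘ σ)).surjective.range_comp, σ.surjective.range_comp]
  ext x
  have hx : σ (Tuple.sort (J ∘ σ) x) = x := hJ.injective (congrFun h2 x)
  have h3 : Tuple.sort (J ∘ σ) x = σ.symm x := (Equiv.apply_eq_iff_eq_symm_apply σ).mp hx
  simp [h3, Equiv.Perm.inv_def]

/-- The localization sum over increasing tuples and permutations reduces to a single sum
over entrywise dominant tuples of pairwise distinct elements. -/
theorem localization_sum_eq_dominant_sum (n k : ℕ) (hn : 1 ≤ n) (hk : 1 ≤ k) (hkn : k ≤ n)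
    (I : Fin k → Fin n) (hI : StrictMono I) :
    Sloc n k I =
      ∑ J ∈ Finset.univ.filter (fun J : Fin k → Fin n =>
          Function.Injective J ∧ ∀ r, I r ≤ J r),
        algebraMap (APoly n) (AField n) (wNum I J 1) /
          algebraMap (APoly n) (AField n) (wDen J 1 * euler J) := by
  classical
  set φ := algebraMap (APoly n) (AField n) with hφ
  set f : (Fin k → Fin n) → AField n := fun J =>
    φ (wNum I J 1) / φ (wDen J 1) / φ (euler J) with hf
  -- Step 1 : rewrite the left-hand side
  have hLHS : Sloc n k I =
      ∑ J ∈ Finset.univ.filter (fun J : Fin k → Fin n => ∀ i j : Fin k, i < j → J i < J j),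
        ∑ σ : Equiv.Perm (Fin k), f (J ∘ σ) := by
    unfold Sloc Wres
    refine Finset.sum_congr rfl fun J _ => ?_
    rw [Finset.sum_div]
    refine Finset.sum_congr rfl fun σ _ => ?_
    rw [hf]
    simp only [← hφ]
    rw [wNum_comp I J σ, wDen_comp J σ, euler_comp J σ]
  -- Step 2 : rewrite the right-hand side
  have hRHS : (∑ J ∈ Finset.univ.filter (fun J : Fin k → Fin n =>
          Function.Injective J ∧ ∀ r, I r ≤ J r),
        φ (wNum I J 1) / φ (wDen J 1 * euler J)) =
      ∑ J ∈ Finset.univ.filter (fun J : Fin k → Fin n => Function.Injective J), f J := by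
    have step1 : (∑ J ∈ Finset.univ.filter (fun J : Fin k → Fin n =>
            Function.Injective J ∧ ∀ r, I r ≤ J r),
          φ (wNum I J 1) / φ (wDen J 1 * euler J)) =
        ∑ J ∈ Finset.univ.filter (fun J : Fin k → Fin n =>
            Function.Injective J ∧ ∀ r, I r ≤ J r), f J := by
      refine Finset.sum_congr rfl fun J _ => ?_
      rw [hf]
      simp only [← hφ]
      rw [map_mul, div_div]
    rw [step1]
    refine Finset.sum_subset ?_ ?_
    · intro J hJ
      simp only [Finset.mem_filter, Finset.mem_univ, true_and] at hJ ⊢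
      exact hJ.1
    · intro J hJ hJs
      simp only [Finset.mem_filter, Finset.mem_univ, true_and] at hJ hJs
      have hdom : ¬ ∀ r, I r ≤ J r := fun h => hJs ⟨hJ, h⟩
      obtain ⟨r, hr⟩ := not_forall.mp hdom
      have hz : wNum I J 1 = 0 := by
        unfold wNum
        apply Finset.prod_eq_zero (Finset.mem_univ r)
        apply mul_eq_zero_of_left
        apply Finset.prod_eq_zero (i := J ((1 : Equiv.Perm (Fin k)) r))
        · simpa using lt_of_not_ge hr
        · simp
      rw [hf]
      simp only [hz, map_zero, zero_div]
  rw [hLHS, hRHS]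
  -- Step 3 : the bijection (increasing J, σ) ↦ J ∘ σ
  rw [← Finset.sum_product']
  refine Finset.sum_nbij' (i := fun p => p.1 ∘ p.2) (j := fun J => (J ∘ Tuple.sort J, (Tuple.sort J)⁻¹))
    ?_ ?_ ?_ ?_ ?_
  · rintro ⟨J, σ⟩ hp
    simp only [Finset.mem_product, Finset.mem_filter, Finset.mem_univ, true_and] at hp ⊢
    have hJ : StrictMono J := fun a b hab => hp.1 a b hab
    exact hJ.injective.comp σ.injective
  · intro J hJ
    simp only [Finset.mem_filter, Finset.mem_univ, true_and] at hJ
    simp only [Finset.mem_product, Finset.mem_filter, Finset.mem_univ, true_and]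
    refine ⟨fun a b hab => ?_, trivial⟩
    exact ((Tuple.monotone_sort J).strictMono_of_injective
      (hJ.comp (Tuple.sort J).injective)) hab
  · rintro ⟨J, σ⟩ hp
    simp only [Finset.mem_product, Finset.mem_filter, Finset.mem_univ, true_and] at hp
    have hJ : StrictMono J := fun a b hab => hp.1 a b hab
    dsimp only
    rw [sort_comp_eq_inv J hJ σ]
    refine Prod.ext ?_ (by simp)
    funext x
    simp
  · intro J hJ
    funext x
    simp
  · rintro ⟨J, σ⟩ hp
    rfl
end

section
/- Fix integers n ≥ 1, 1 ≤ k ≤ n, a strictly increasing k-tuple I = (i_1 < … < i_k) in {1,…,n}, and indices 1 ≤ x < y ≤ n. Let J = (j_1 < … < j_k) be a strictly increasing k-tuple with y ∈ J, x ∉ J, and j_r ≥ i_r for all r, and let Ĵ = (ĵ_1 < … < ĵ_k) be the strictly increasing k-tuple with underlying set (J∖{y}) ∪ {x}. Define the polynomial N_J := Σ_{σ ∈ S_k} sgn(σ) · [ ∏_{r=1}^{k} ( ∏_{α=1}^{i_r−1} (a_α − a_{j_{σ(r)}}) · ∏_{β=i_r+1}^{n} (a_{j_{σ(r)}} − a_β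 + ħ) ) ] · ∏_{1≤ℓ<m≤k} (a_{j_{σ(m)}} − a_{j_{σ(ℓ)}} + ħ) in ℚ[a_1,…,a_n,ħ] (so that W(p_I)|_{p_J} = N_J / [∏_{1≤ℓ<m≤k} (a_{j_ℓ}−a_{j_m})(a_{j_ℓ}−a_{j_m}+ħ)(a_{j_m}−a_{j_ℓ}+ħ)]). If it is NOT the case that ĵ_r ≥ i_r for all r, then the ring homomorphism ℚ[a_1,…,a_n,ħ] → ℚ[a_1,…,a_n,ħ] sending a_x ↦ a_y and fixing all other variables sends N_J to 0. -/
open Finset MvPolynomial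

/-- The numerator polynomial `N_J` of the restricted weight function `W(p_I)|_{p_J}`. -/
noncomputable def NJpoly {n k : ℕ} (I J : Fin k → Fin n) : APoly n :=
  ∑ σ : Equiv.Perm (Fin k),
    MvPolynomial.C ((Equiv.Perm.sign σ : ℤ) : ℚ) *
      (wNum I J σ * ∏ m : Fin k, ∏ l ∈ Finset.Iio m, (av (J (σ m)) - av (J (σ l)) + hbar))

/-- Pigeonhole for permutations: some index `p ≥ r` maps to `τ p ≤ r`. -/
lemma exists_ge_map_le {k : ℕ} (τ : Equiv.Perm (Fin k)) (r : Fin k) :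
    ∃ p, r ≤ p ∧ τ p ≤ r := by
  by_contra h
  push_neg at h
  have hmap : ∀ q ∈ Finset.Iic r, τ.symm q ∈ Finset.Iio r := by
    intro q hq
    simp only [Finset.mem_Iic] at hq
    simp only [Finset.mem_Iio]
    by_contra hq'
    push_neg at hq'
    have := h _ hq'
    rw [Equiv.apply_symm_apply] at this
    exact absurd hq (not_le.mpr this)
  have hcard := Finset.card_le_card_of_injOn _ hmap (τ.symm.injective.injOn)
  rw [Fin.card_Iic, Fin.card_Iio] at hcard
  omega

/-- If `K` is injective with the same range as the strictly monotone `Jhat`, and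
`I ≤ K` pointwise with `I` strictly monotone, then `I ≤ Jhat` pointwise. -/
lemma dominance_of_range {n k : ℕ} {I Jhat K : Fin k → Fin n}
    (hI : StrictMono I) (hJhat : StrictMono Jhat) (hK : Function.Injective K)
    (hrange : Set.range K = Set.range Jhat) (hIK : ∀ r, I r ≤ K r) :
    ∀ r, I r ≤ Jhat r := by
  intro r
  have hmem : ∀ p, ∃ q, Jhat q = K p := by
    intro p
    have : K p ∈ Set.range Jhat := hrange ▸ Set.mem_range_self p
    exact this
  choose g hg using hmem
  have hginj : Function.Injective g := by
    intro a b hab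
    exact hK (by rw [← hg a, ← hg b, hab])
  have hgbij : Function.Bijective g := Finite.injective_iff_bijective.mp hginj
  obtain ⟨p, hrp, hpr⟩ := exists_ge_map_le (Equiv.ofBijective g hgbij) r
  calc I r ≤ I p := hI.monotone hrp
    _ ≤ K p := hIK p
    _ = Jhat (g p) := (hg p).symm
    _ ≤ Jhat r := hJhat.monotone hpr

/-- If `Ĵ = (J∖{y})∪{x}` is not entrywise `≥ I`, then the substitution `a_x ↦ a_y`
kills the numerator `N_J`. -/
theorem NJ_vanishes_of_not_dominant (n k : ℕ) (hn : 1 ≤ n) (hk : 1 ≤ k) (hkn : k ≤ n)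
    (I J Jhat : Fin k → Fin n) (x y : Fin n) (hxy : x < y)
    (hI : StrictMono I) (hJ : StrictMono J)
    (hyJ : y ∈ Set.range J) (hxJ : x ∉ Set.range J) (hJI : ∀ r, I r ≤ J r)
    (hJhat : StrictMono Jhat)
    (hJhatset : Set.range Jhat = (Set.range J \ {y}) ∪ {x})
    (hnot : ¬ ∀ r, I r ≤ Jhat r) :
    MvPolynomial.rename
        (fun v : Fin n ⊕ Unit => if v = Sum.inl x then Sum.inl y else v)
        (NJpoly I J) = 0 := by
  obtain ⟨s, hs⟩ := hyJ
  have hx_ne : ∀ v : Fin k, J v ≠ x := fun v hv => hxJ ⟨v, hv⟩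
  have hyx : (Sum.inl y : Fin n ⊕ Unit) ≠ Sum.inl x := by
    intro h
    exact absurd (Sum.inl.inj h) (ne_of_gt hxy)
  unfold NJpoly
  rw [map_sum]
  apply Finset.sum_eq_zero
  intro σ _
  rw [map_mul, map_mul]
  suffices h : (MvPolynomial.rename
      (fun v : Fin n ⊕ Unit => if v = Sum.inl x then Sum.inl y else v))
      (wNum I J σ) = 0 by
    rw [h, zero_mul, mul_zero]
  by_cases hB : ∃ r, J (σ r) < I r
  · obtain ⟨r, hr⟩ := hB
    have hz : wNum I J σ = 0 := by
      unfold wNum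
      apply Finset.prod_eq_zero (Finset.mem_univ r)
      apply mul_eq_zero_of_left
      apply Finset.prod_eq_zero (Finset.mem_Iio.mpr hr)
      exact sub_self _
    rw [hz, map_zero]
  · push_neg at hB
    set r₁ := σ.symm s with hr₁
    have hσr₁ : σ r₁ = s := Equiv.apply_symm_apply σ s
    have hxI : x < I r₁ := by
      by_contra hxI
      push_neg at hxI
      apply hnot
      set K : Fin k → Fin n := fun p => if p = r₁ then x else J (σ p) with hKdef
      have hKval : ∀ p, p ≠ r₁ → K p = J (σ p) := by
        intro p hp; simp [hKdef, hp]
      have hKr₁ : K r₁ = x := by simp [hKdef]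
      have hKinj : Function.Injective K := by
        intro a b hab
        by_cases ha : a = r₁ <;> by_cases hb : b = r₁
        · rw [ha, hb]
        · rw [ha, hKr₁, hKval b hb] at hab
          exact absurd hab.symm (hx_ne (σ b))
        · rw [hb, hKr₁, hKval a ha] at hab
          exact absurd hab (hx_ne (σ a))
        · rw [hKval a ha, hKval b hb] at hab
          exact σ.injective (hJ.injective hab)
      have hKrange : Set.range K = Set.range Jhat := by
        rw [hJhatset]
        ext v
        constructor
        · rintro ⟨p, hp⟩
          by_cases hpr : p = r₁
          · right
            rw [hpr, hKr₁] at hp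
            exact hp.symm
          · left
            rw [hKval p hpr] at hp
            refine ⟨⟨σ p, hp⟩, ?_⟩
            intro hv
            apply hpr
            have hσps : σ p = s := hJ.injective (by rw [hp, hv, hs])
            rw [hr₁, ← hσps, Equiv.symm_apply_apply]
        · rintro (⟨⟨q, hq⟩, hv⟩ | hv)
          · refine ⟨σ.symm q, ?_⟩
            have hne : σ.symm q ≠ r₁ := by
              intro h
              apply hv
              have : q = s := by
                have := congrArg σ h
                rw [Equiv.apply_symm_apply, hσr₁] at this
                exact this
              rw [← hq, this, hs]; rfl
            rw [hKval _ hne, Equiv.apply_symm_apply, hq]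
          · exact ⟨r₁, by rw [hKr₁, hv]⟩
      have hIK : ∀ p, I p ≤ K p := by
        intro p
        by_cases hp : p = r₁
        · rw [hp, hKr₁]; exact hxI
        · rw [hKval p hp]; exact hB p
      exact dominance_of_range hI hJhat hKinj hKrange hIK
    unfold wNum
    rw [map_prod]
    apply Finset.prod_eq_zero (Finset.mem_univ r₁)
    rw [map_mul]
    apply mul_eq_zero_of_left
    rw [map_prod]
    apply Finset.prod_eq_zero (Finset.mem_Iio.mpr hxI)
    rw [map_sub]
    have h1 : (MvPolynomial.rename
        (fun v : Fin n ⊕ Unit => if v = Sum.inl x then Sum.inl y else v)) (av x)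
        = (av y : APoly n) := by
      rw [av, rename_X, if_pos rfl]; rfl
    have h2 : (MvPolynomial.rename
        (fun v : Fin n ⊕ Unit => if v = Sum.inl x then Sum.inl y else v)) (av (J (σ r₁)))
        = (av y : APoly n) := by
      rw [hσr₁, hs, av, rename_X, if_neg hyx]
    rw [h1, h2, sub_self]
end
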